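/- arXiv:2203.12260 — 4 statements merged into one kernel-verified Lean document; each statement's English description precedes it below -/
import Mathlib

section
/- There exists a unique lower-triangular matrix C = (C(i,j))_{i,j≥0} with C(i,j)=0 for i<j, such that the columns C_j satisfy Q C_j = C_{j-1} for all j≥1, C_0 = 0, and C(i,1) = s(i) for all i≥0, where s is the scale function. -/
/-!
Since `λ_i ≠ 0`, the equation `Q g = f` on `i ≥ 1` is a second-order recurrence solved for
`g (i + 1)`, so it has exactly one solution with `g 0 = g 1 = 0`. Lower triangularity forces
`C(0, j) = C(1, j) = 0` for `j ≥ 2`, hence every column is determined by the previous one,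
and it stays lower triangular. The only remaining condition, `Q s = C_0 = 0`, is the harmonicity
of the scale function: `λ_i (s(i+1) - s(i)) = 1/π_i = μ_i (s(i) - s(i-1))` because
`π_{i+1} μ_{i+1} = π_i λ_i`.
-/

namespace BirthDeath

variable {lam mu : ℕ → ℝ}

def generator (lam mu f : ℕ → ℝ) (i : ℕ) : ℝ :=
  mu i * f (i - 1) - (lam i + mu i) * f i + lam i * f (i + 1)

theorem generator_eq_sub (f : ℕ → ℝ) (i : ℕ) :
    generator lam mu f i = lam i * (f (i + 1) - f i) - mu i * (f i - f (i - 1)) := by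
  unfold generator
  ring

theorem eq_of_generator_eq (hlam : ∀ i, 1 ≤ i → lam i ≠ 0) {f g : ℕ → ℝ}
    (h0 : f 0 = g 0) (h1 : f 1 = g 1)
    (hfg : ∀ i, 1 ≤ i → generator lam mu f i = generator lam mu g i) : f = g := by
  have key : ∀ i, f i = g i ∧ f (i + 1) = g (i + 1) := by
    intro i
    induction i with
    | zero => exact ⟨h0, h1⟩
    | succ i ih =>
      refine ⟨ih.2, ?_⟩
      have h := hfg (i + 1) (by omega)
      simp only [generator, Nat.add_sub_cancel, ih.1, ih.2] at h
      exact mul_left_cancel₀ (hlam (i + 1) (by omega)) (by linarith)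
  exact funext fun i => (key i).1

noncomputable def solveGenerator (lam mu f : ℕ → ℝ) : ℕ → ℝ
  | 0 => 0
  | 1 => 0
  | i + 2 => ((lam (i + 1) + mu (i + 1)) * solveGenerator lam mu f (i + 1)
      - mu (i + 1) * solveGenerator lam mu f i + f (i + 1)) / lam (i + 1)

theorem generator_solveGenerator (hlam : ∀ i, 1 ≤ i → lam i ≠ 0) (f : ℕ → ℝ) {i : ℕ}
    (hi : 1 ≤ i) : generator lam mu (solveGenerator lam mu f) i = f i := by
  obtain ⟨i, rfl⟩ := Nat.exists_eq_add_of_le' hi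
  have := hlam (i + 1) hi
  rw [generator, Nat.add_sub_cancel, solveGenerator]
  field_simp
  ring

theorem eq_solveGenerator (hlam : ∀ i, 1 ≤ i → lam i ≠ 0) {f g : ℕ → ℝ}
    (h0 : g 0 = 0) (h1 : g 1 = 0) (hg : ∀ i, 1 ≤ i → generator lam mu g i = f i) :
    g = solveGenerator lam mu f :=
  eq_of_generator_eq hlam h0 h1 fun _ hi =>
    (hg _ hi).trans (generator_solveGenerator hlam f hi).symm

theorem solveGenerator_eq_zero_of_lt {f : ℕ → ℝ} {k : ℕ} (hf : ∀ i < k, f i = 0) :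
    ∀ i < k + 1, solveGenerator lam mu f i = 0
  | 0, _ => rfl
  | 1, _ => rfl
  | i + 2, hi => by
    rw [solveGenerator, solveGenerator_eq_zero_of_lt hf i (by omega),
      solveGenerator_eq_zero_of_lt hf (i + 1) (by omega), hf (i + 1) (by omega)]
    simp


noncomputable def column (lam mu s : ℕ → ℝ) : ℕ → ℕ → ℝ
  | 0 => 0
  | 1 => s
  | j + 2 => solveGenerator lam mu (column lam mu s (j + 1))

variable {s : ℕ → ℝ}

theorem column_eq_zero_of_lt (hs0 : s 0 = 0) : ∀ j, ∀ i < j, column lam mu s j i = 0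
  | 1, 0, _ => hs0
  | j + 2, i, hi =>
    solveGenerator_eq_zero_of_lt (column_eq_zero_of_lt hs0 (j + 1)) i hi

theorem generator_column (hlam : ∀ i, 1 ≤ i → lam i ≠ 0)
    (hs : ∀ i, 1 ≤ i → generator lam mu s i = 0) :
    ∀ j, 1 ≤ j → ∀ i, 1 ≤ i → generator lam mu (column lam mu s j) i = column lam mu s (j - 1) i
  | 1, _, i, hi => hs i hi
  | _ + 2, _, _, hi => generator_solveGenerator hlam _ hi

theorem eq_column (hlam : ∀ i, 1 ≤ i → lam i ≠ 0) {C : ℕ → ℕ → ℝ}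
    (htri : ∀ i j, i < j → C i j = 0) (h0 : ∀ i, C i 0 = 0) (h1 : ∀ i, C i 1 = s i)
    (hgen : ∀ j, 1 ≤ j → ∀ i, 1 ≤ i → generator lam mu (fun i => C i j) i = C i (j - 1)) :
    ∀ j, (fun i => C i j) = column lam mu s j
  | 0 => funext h0
  | 1 => funext h1
  | j + 2 => eq_solveGenerator hlam (htri 0 _ (by omega)) (htri 1 _ (by omega)) fun i hi => by
      rw [hgen (j + 2) (by omega) i hi, ← eq_column hlam htri h0 h1 hgen (j + 1)]
      rfl

theorem existsUnique_column (hlam : ∀ i, 1 ≤ i → lam i ≠ 0) (hs0 : s 0 = 0)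
    (hs : ∀ i, 1 ≤ i → generator lam mu s i = 0) :
    ∃! C : ℕ → ℕ → ℝ,
      (∀ i j, i < j → C i j = 0) ∧ (∀ i, C i 0 = 0) ∧ (∀ i, C i 1 = s i) ∧
      ∀ j, 1 ≤ j → ∀ i, 1 ≤ i → generator lam mu (fun i => C i j) i = C i (j - 1) :=
  ⟨fun i j => column lam mu s j i,
    ⟨fun i j hij => column_eq_zero_of_lt hs0 j i hij, fun _ => rfl, fun _ => rfl,
      generator_column hlam hs⟩,
    fun _ ⟨htri, h0, h1, hgen⟩ => funext fun i => funext fun j =>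
      congrFun (eq_column hlam htri h0 h1 hgen j) i⟩

theorem pi_succ_mul_mu (hmu : ∀ i, 1 ≤ i → mu i ≠ 0) {pi : ℕ → ℝ}
    (hpi : ∀ i, 1 ≤ i →
      pi i = (∏ j ∈ Finset.Ico 1 i, lam j) / ∏ j ∈ Finset.Ico 2 (i + 1), mu j)
    {i : ℕ} (hi : 1 ≤ i) : pi (i + 1) * mu (i + 1) = pi i * lam i := by
  have hprod : ∏ j ∈ Finset.Ico 2 (i + 1), mu j ≠ 0 :=
    Finset.prod_ne_zero_iff.2 fun j hj => hmu j (by simp at hj; omega)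
  rw [hpi (i + 1) (by omega), hpi i hi, Finset.prod_Ico_succ_top hi,
    Finset.prod_Ico_succ_top (by omega : 2 ≤ i + 1)]
  field_simp [hmu (i + 1) (by omega)]

theorem generator_scale_eq_zero (hlam : ∀ i, 1 ≤ i → lam i ≠ 0) (hmu : ∀ i, 1 ≤ i → mu i ≠ 0)
    {pi : ℕ → ℝ} (hpi1 : pi 1 = 1) (hpi : ∀ i, 1 ≤ i → pi (i + 1) * mu (i + 1) = pi i * lam i)
    (hs1 : s 1 - s 0 = 1 / mu 1) (hs : ∀ i, 1 ≤ i → s (i + 1) - s i = 1 / (pi i * lam i)) :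
    ∀ i, 1 ≤ i → generator lam mu s i = 0
  | 1, _ => by
    rw [generator_eq_sub, hs 1 le_rfl, hpi1, Nat.sub_self, hs1]
    field_simp [hlam 1 le_rfl, hmu 1 le_rfl]
    ring
  | i + 2, _ => by
    rw [generator_eq_sub, hs (i + 2) (by omega), show i + 2 - 1 = i + 1 from rfl, hs (i + 1) (by omega),
      ← hpi (i + 1) (by omega)]
    field_simp [hlam (i + 2) (by omega), hmu (i + 2) (by omega)]
    ring

end BirthDeath

open BirthDeath in
/-- Existence and uniqueness of the matrix `C` of generalized `0`-eigenfunctions: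
`C(i,j) = 0` for `i < j`, `C_0 = 0`, `C(·,1) = s` and `Q C_j = C_{j-1}` for `j ≥ 1`. -/
theorem stmt5 (lam mu : ℕ → ℝ)
    (hlam : ∀ i, 1 ≤ i → 0 < lam i) (hmu : ∀ i, 1 ≤ i → 0 < mu i)
    (pi s : ℕ → ℝ)
    (hpi : ∀ i, 1 ≤ i →
      pi i = (∏ j ∈ Finset.Ico 1 i, lam j) / ∏ j ∈ Finset.Ico 2 (i + 1), mu j)
    (hs0 : s 0 = 0)
    (hs : ∀ i, 1 ≤ i →
      s i = 1 / mu 1 + ∑ j ∈ Finset.Ico 1 i, 1 / (pi j * lam j)) :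
    ∃! C : ℕ → ℕ → ℝ,
      (∀ i j, i < j → C i j = 0) ∧
      (∀ i, C i 0 = 0) ∧
      (∀ i, C i 1 = s i) ∧
      (∀ j, 1 ≤ j → ∀ i, 1 ≤ i →
        mu i * C (i - 1) j - (lam i + mu i) * C i j + lam i * C (i + 1) j
          = C i (j - 1)) := by
  have hlam' : ∀ i, 1 ≤ i → lam i ≠ 0 := fun i hi => (hlam i hi).ne'
  have hmu' : ∀ i, 1 ≤ i → mu i ≠ 0 := fun i hi => (hmu i hi).ne'
  have hpi1 : pi 1 = 1 := by simp [hpi 1 le_rfl]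
  have hs1 : s 1 - s 0 = 1 / mu 1 := by simp [hs 1 le_rfl, hs0]
  have hs_succ : ∀ i, 1 ≤ i → s (i + 1) - s i = 1 / (pi i * lam i) := fun i hi => by
    rw [hs (i + 1) (by omega), hs i hi, Finset.sum_Ico_succ_top hi]
    ring
  exact existsUnique_column hlam' hs0 <| generator_scale_eq_zero hlam' hmu' hpi1
    (fun _ => pi_succ_mul_mu hmu' hpi) hs1 hs_succ
end

section
/- The diagonal entries of the matrix C satisfy the recursion C(j,j) = C(j-1,j-1)/λ_{j-1} for j≥2, with C(1,1)=1/μ₁; in particular C(j,j) = 1/(μ₁ λ₁ λ₂ ⋯ λ_{j-1}) > 0 for all j≥1. -/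
open Finset

/-- Column `n + 1` vanishes above the diagonal, so row `n` of `Q C_{n+1} = C_n` reduces to
`λₙ C(n+1, n+1) = C(n, n)`. -/
theorem diag_succ_eq_div_of_generator_eq {lam mu : ℕ → ℝ} {C : ℕ → ℕ → ℝ}
    (hC_upper : ∀ i j, i < j → C i j = 0)
    (hQC : ∀ j, 1 ≤ j → ∀ i, 1 ≤ i →
      mu i * C (i - 1) j - (lam i + mu i) * C i j + lam i * C (i + 1) j = C i (j - 1))
    {n : ℕ} (hn : 1 ≤ n) (hlam : lam n ≠ 0) :
    C (n + 1) (n + 1) = C n n / lam n := by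
  have h := hQC (n + 1) (by omega) n hn
  rw [hC_upper (n - 1) (n + 1) (by omega), hC_upper n (n + 1) (by omega),
    Nat.add_sub_cancel] at h
  rw [eq_div_iff hlam]
  linarith

theorem eq_one_div_mul_prod_of_succ_eq_div {d lam : ℕ → ℝ} {m : ℝ} (h_one : d 1 = 1 / m)
    (h_succ : ∀ n, 1 ≤ n → d (n + 1) = d n / lam n) :
    ∀ j, 1 ≤ j → d j = 1 / (m * ∏ l ∈ Ico 1 j, lam l) := by
  intro j hj
  induction j, hj using Nat.le_induction with
  | base => simpa using h_one
  | succ n hn ih => rw [h_succ n hn, ih, prod_Ico_succ_top hn, div_div, mul_assoc]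

theorem stmt6_general (lam mu : ℕ → ℝ)
    (hlam : ∀ i, 1 ≤ i → 0 < lam i) (hmu : ∀ i, 1 ≤ i → 0 < mu i)
    (pi s : ℕ → ℝ)
    (hs : ∀ i, 1 ≤ i →
      s i = 1 / mu 1 + ∑ j ∈ Finset.Ico 1 i, 1 / (pi j * lam j))
    (C : ℕ → ℕ → ℝ)
    (hC1 : ∀ i j, i < j → C i j = 0)
    (hC3 : ∀ i, C i 1 = s i)
    (hC4 : ∀ j, 1 ≤ j → ∀ i, 1 ≤ i →
      mu i * C (i - 1) j - (lam i + mu i) * C i j + lam i * C (i + 1) j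
        = C i (j - 1)) :
    C 1 1 = 1 / mu 1 ∧
    (∀ j, 2 ≤ j → C j j = C (j - 1) (j - 1) / lam (j - 1)) ∧
    (∀ j, 1 ≤ j →
      C j j = 1 / (mu 1 * ∏ l ∈ Finset.Ico 1 j, lam l) ∧ 0 < C j j) := by
  have h_one : C 1 1 = 1 / mu 1 := by simp [hC3, hs 1 le_rfl]
  have h_succ (n : ℕ) (hn : 1 ≤ n) : C (n + 1) (n + 1) = C n n / lam n :=
    diag_succ_eq_div_of_generator_eq hC1 hC4 hn (hlam n hn).ne'
  have h_closed := eq_one_div_mul_prod_of_succ_eq_div (d := fun j => C j j) h_one h_succ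
  refine ⟨h_one, fun j hj => ?_, fun j hj => ⟨h_closed j hj, ?_⟩⟩
  · obtain ⟨n, rfl⟩ : ∃ n, j = n + 1 := ⟨j - 1, by omega⟩
    simpa using h_succ n (by omega)
  · rw [h_closed j hj]
    exact one_div_pos.2 <| mul_pos (hmu 1 le_rfl) <|
      prod_pos fun l hl => hlam l (mem_Ico.mp hl).1

/-- The diagonal entries of `C` satisfy `C(j,j) = C(j-1,j-1)/λ_{j-1}` for `j ≥ 2`,
`C(1,1) = 1/μ₁`, and `C(j,j) = 1/(μ₁ λ₁ ⋯ λ_{j-1}) > 0` for `j ≥ 1`. -/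
theorem stmt6 (lam mu : ℕ → ℝ)
    (hlam : ∀ i, 1 ≤ i → 0 < lam i) (hmu : ∀ i, 1 ≤ i → 0 < mu i)
    (pi s : ℕ → ℝ)
    (hpi : ∀ i, 1 ≤ i →
      pi i = (∏ j ∈ Finset.Ico 1 i, lam j) / ∏ j ∈ Finset.Ico 2 (i + 1), mu j)
    (hs0 : s 0 = 0)
    (hs : ∀ i, 1 ≤ i →
      s i = 1 / mu 1 + ∑ j ∈ Finset.Ico 1 i, 1 / (pi j * lam j))
    (C : ℕ → ℕ → ℝ)
    (hC1 : ∀ i j, i < j → C i j = 0)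
    (hC2 : ∀ i, C i 0 = 0)
    (hC3 : ∀ i, C i 1 = s i)
    (hC4 : ∀ j, 1 ≤ j → ∀ i, 1 ≤ i →
      mu i * C (i - 1) j - (lam i + mu i) * C i j + lam i * C (i + 1) j
        = C i (j - 1)) :
    C 1 1 = 1 / mu 1 ∧
    (∀ j, 2 ≤ j → C j j = C (j - 1) (j - 1) / lam (j - 1)) ∧
    (∀ j, 1 ≤ j →
      C j j = 1 / (mu 1 * ∏ l ∈ Finset.Ico 1 j, lam l) ∧ 0 < C j j) :=
  stmt6_general lam mu hlam hmu pi s hs C hC1 hC3 hC4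
end

section
/- For each θ ∈ ℝ, the function ψ_θ(i) := Σ_{j=1}^{i} C(i,j) θ^{j-1} is the unique solution u of Qu = θu with u(0)=0 and D_s u(0) := μ₁(u(1)-u(0)) = 1. -/
/-!
Each column satisfies `Q C_j = C_{j-1}` with `C_0 = 0`, so applying `Q` termwise to
`ψ_θ = Σ_j C_j θ^{j-1}` shifts every column one step down, which multiplies the series by `θ`;
lower triangularity makes all sums finite. Uniqueness holds because `λ_i ≠ 0` lets the equation
`Qu = θu` at `i` be solved for `u(i+1)`, so a solution is determined by `u(0)` and `u(1)`.
-/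

open Finset

variable {K : Type*} [Field K]

/-- The generator `Q` of the birth–death chain. -/
def birthDeathGen (lam mu u : ℕ → K) (i : ℕ) : K :=
  mu i * u (i - 1) - (lam i + mu i) * u i + lam i * u (i + 1)

theorem birthDeathGen_congr (lam mu : ℕ → K) {u v : ℕ → K} {i : ℕ}
    (h : ∀ k ≤ i + 1, u k = v k) : birthDeathGen lam mu u i = birthDeathGen lam mu v i := by
  simp only [birthDeathGen, h (i - 1) (by omega), h i (by omega), h (i + 1) le_rfl]

theorem birthDeathGen_sum_mul (lam mu : ℕ → K) (f : ℕ → ℕ → K) (c : ℕ → K) (t : Finset ℕ)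
    (i : ℕ) :
    birthDeathGen lam mu (fun k => ∑ j ∈ t, f k j * c j) i
      = ∑ j ∈ t, birthDeathGen lam mu (fun k => f k j) i * c j := by
  simp only [birthDeathGen, mul_sum, ← sum_sub_distrib, ← sum_add_distrib]
  exact sum_congr rfl fun j _ => by ring

theorem eq_of_birthDeathGen_eq_smul {lam mu : ℕ → K} (hlam : ∀ i, 1 ≤ i → lam i ≠ 0) {θ : K}
    {u v : ℕ → K} (hu : ∀ i, 1 ≤ i → birthDeathGen lam mu u i = θ * u i)
    (hv : ∀ i, 1 ≤ i → birthDeathGen lam mu v i = θ * v i) (h0 : u 0 = v 0) (h1 : u 1 = v 1) :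
    u = v := by
  funext n
  induction n using Nat.strong_induction_on with
  | _ n ih =>
    match n with
    | 0 => exact h0
    | 1 => exact h1
    | m + 2 =>
      have hum := hu (m + 1) (by omega)
      have hvm := hv (m + 1) (by omega)
      simp only [birthDeathGen, Nat.add_sub_cancel, ih m (by omega),
        ih (m + 1) (by omega)] at hum hvm
      exact mul_left_cancel₀ (hlam (m + 1) (by omega)) (by linear_combination hum - hvm)

section LowerTriangular

variable {C : ℕ → ℕ → K} (hC : ∀ i j, i < j → C i j = 0) (θ : K)
include hC

theorem sum_range_eq_of_lowerTriangular {i n : ℕ} (hin : i ≤ n) :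
    ∑ j ∈ range n, C i (j + 1) * θ ^ j = ∑ j ∈ range i, C i (j + 1) * θ ^ j := by
  refine (sum_subset (range_subset_range.2 hin) fun j _ hj => ?_).symm
  rw [hC i (j + 1) (by simp only [mem_range] at hj; omega), zero_mul]

theorem birthDeathGen_series_eq_smul {lam mu : ℕ → K} (hC0 : ∀ i, C i 0 = 0)
    (hQC : ∀ j, 1 ≤ j → ∀ i, 1 ≤ i → birthDeathGen lam mu (fun k => C k j) i = C i (j - 1))
    {i : ℕ} (hi : 1 ≤ i) :
    birthDeathGen lam mu (fun k => ∑ j ∈ range k, C k (j + 1) * θ ^ j) i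
      = θ * ∑ j ∈ range i, C i (j + 1) * θ ^ j := by
  have hψ : ∀ k ≤ i + 1, ∑ j ∈ range k, C k (j + 1) * θ ^ j
      = ∑ j ∈ range (i + 1), C k (j + 1) * θ ^ j := fun k hk =>
    (sum_range_eq_of_lowerTriangular hC θ hk).symm
  calc birthDeathGen lam mu (fun k => ∑ j ∈ range k, C k (j + 1) * θ ^ j) i
      = ∑ j ∈ range (i + 1), birthDeathGen lam mu (fun k => C k (j + 1)) i * θ ^ j := by
        rw [birthDeathGen_congr lam mu hψ, birthDeathGen_sum_mul]
    _ = ∑ j ∈ range (i + 1), C i j * θ ^ j :=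
        sum_congr rfl fun j _ => by rw [hQC (j + 1) (by omega) i hi, Nat.add_sub_cancel]
    _ = θ * ∑ j ∈ range i, C i (j + 1) * θ ^ j := by
        rw [sum_range_succ', hC0, zero_mul, add_zero, mul_sum]
        exact sum_congr rfl fun j _ => by ring

end LowerTriangular

theorem sum_Icc_one_eq_sum_range {M : Type*} [AddCommMonoid M] (f : ℕ → M) (n : ℕ) :
    ∑ j ∈ Icc 1 n, f j = ∑ j ∈ range n, f (j + 1) := by
  rw [range_eq_Ico, sum_Ico_add' f, zero_add, Ico_add_one_right_eq_Icc]

theorem stmt8_general (lam mu : ℕ → ℝ)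
    (hlam : ∀ i, 1 ≤ i → 0 < lam i) (hmu : ∀ i, 1 ≤ i → 0 < mu i)
    (pi s : ℕ → ℝ)
    (hs : ∀ i, 1 ≤ i →
      s i = 1 / mu 1 + ∑ j ∈ Finset.Ico 1 i, 1 / (pi j * lam j))
    (C : ℕ → ℕ → ℝ)
    (hC1 : ∀ i j, i < j → C i j = 0)
    (hC2 : ∀ i, C i 0 = 0)
    (hC3 : ∀ i, C i 1 = s i)
    (hC4 : ∀ j, 1 ≤ j → ∀ i, 1 ≤ i →
      mu i * C (i - 1) j - (lam i + mu i) * C i j + lam i * C (i + 1) j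
        = C i (j - 1))
    (θ : ℝ) (psi : ℕ → ℝ)
    (hpsi : ∀ i, psi i = ∑ j ∈ Finset.Icc 1 i, C i j * θ ^ (j - 1)) :
    (psi 0 = 0 ∧ mu 1 * (psi 1 - psi 0) = 1 ∧
      ∀ i, 1 ≤ i →
        mu i * psi (i - 1) - (lam i + mu i) * psi i + lam i * psi (i + 1)
          = θ * psi i) ∧
    ∀ u : ℕ → ℝ,
      (u 0 = 0 ∧ mu 1 * (u 1 - u 0) = 1 ∧
        ∀ i, 1 ≤ i →
          mu i * u (i - 1) - (lam i + mu i) * u i + lam i * u (i + 1)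
            = θ * u i) → u = psi := by
  obtain rfl : psi = fun i => ∑ j ∈ range i, C i (j + 1) * θ ^ j :=
    funext fun i => (hpsi i).trans (by simp only [sum_Icc_one_eq_sum_range, Nat.add_sub_cancel])
  have hmu1 : mu 1 ≠ 0 := (hmu 1 le_rfl).ne'
  have hψ1 : ∑ j ∈ range 1, C 1 (j + 1) * θ ^ j = 1 / mu 1 := by
    simp [hC3, hs 1 le_rfl]
  have hQψ := fun i (hi : 1 ≤ i) => birthDeathGen_series_eq_smul hC1 θ hC2 hC4 hi
  refine ⟨⟨by simp, by simp only [hψ1, sum_range_zero, sub_zero, mul_one_div_cancel hmu1], hQψ⟩,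
    fun u ⟨hu0, hu1, hQu⟩ => ?_⟩
  rw [hu0, sub_zero] at hu1
  exact eq_of_birthDeathGen_eq_smul (fun i hi => (hlam i hi).ne') hQu hQψ (by simpa using hu0)
    (by simpa only [hψ1] using eq_one_div_of_mul_eq_one_right hu1)

/-- For each `θ ∈ ℝ`, `ψ_θ(i) = Σ_{j=1}^i C(i,j) θ^{j-1}` is the unique solution of
`Qu = θu` with `u(0) = 0` and `D_s u(0) = μ₁ (u(1) - u(0)) = 1`. -/
theorem stmt8 (lam mu : ℕ → ℝ)
    (hlam : ∀ i, 1 ≤ i → 0 < lam i) (hmu : ∀ i, 1 ≤ i → 0 < mu i)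
    (pi s : ℕ → ℝ)
    (hpi : ∀ i, 1 ≤ i →
      pi i = (∏ j ∈ Finset.Ico 1 i, lam j) / ∏ j ∈ Finset.Ico 2 (i + 1), mu j)
    (hs0 : s 0 = 0)
    (hs : ∀ i, 1 ≤ i →
      s i = 1 / mu 1 + ∑ j ∈ Finset.Ico 1 i, 1 / (pi j * lam j))
    (C : ℕ → ℕ → ℝ)
    (hC1 : ∀ i j, i < j → C i j = 0)
    (hC2 : ∀ i, C i 0 = 0)
    (hC3 : ∀ i, C i 1 = s i)
    (hC4 : ∀ j, 1 ≤ j → ∀ i, 1 ≤ i →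
      mu i * C (i - 1) j - (lam i + mu i) * C i j + lam i * C (i + 1) j
        = C i (j - 1))
    (θ : ℝ) (psi : ℕ → ℝ)
    (hpsi : ∀ i, psi i = ∑ j ∈ Finset.Icc 1 i, C i j * θ ^ (j - 1)) :
    (psi 0 = 0 ∧ mu 1 * (psi 1 - psi 0) = 1 ∧
      ∀ i, 1 ≤ i →
        mu i * psi (i - 1) - (lam i + mu i) * psi i + lam i * psi (i + 1)
          = θ * psi i) ∧
    ∀ u : ℕ → ℝ,
      (u 0 = 0 ∧ mu 1 * (u 1 - u 0) = 1 ∧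
        ∀ i, 1 ≤ i →
          mu i * u (i - 1) - (lam i + mu i) * u i + lam i * u (i + 1)
            = θ * u i) → u = psi :=
  stmt8_general lam mu hlam hmu pi s hs C hC1 hC2 hC3 hC4 θ psi hpsi
end

section
/- For the symmetric random walk (λ_i=μ_i=κ), the matrix C is given explicitly by C(i,j) = (1/(2^{j−1} κ^j)) Σ_{l=j}^{i} binom(l−1, j−1) u(i−1, l−1), where u(k,l) are the coefficients of the Chebyshev polynomials of the second kind U_k(x) = Σ_l u(k,l) x^l; i.e., the function i ↦ Σ_{j=1}^i C(i,j) θ^{j−1} equals (1/κ)U_{i−1}(1+θ/(2κ)) and solves Qu=θu with u(0)=0, u(1)=1/κ. -/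
/-!
The inner sum `∑_{l ≥ j} binom(l-1, j-1) u(i-1, l-1)` is the `(j-1)`-th coefficient of the
Taylor expansion of `U_{i-1}` at `1`, so the generating polynomial of row `i` of `C`, after the
scaling `y = θ / (2κ)`, is `(1/κ) U_{i-1}(1 + y)`. The three-term recurrence
`U_{n+1} = 2x U_n - U_{n-1}` then becomes `Qu = θu`, because `2(x - 1) = θ / κ`.
-/

open Polynomial Finset

theorem sum_Icc_add_one_sub_one {M : Type*} [AddCommMonoid M] (a b : ℕ) (f : ℕ → M) :
    ∑ l ∈ Icc (a + 1) b, f (l - 1) = ∑ l ∈ Ico a b, f l := by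
  rw [← Ico_add_one_right_eq_Icc, sum_Ico_add_right_sub_eq]

section

variable {R : Type*} [CommSemiring R]

theorem sum_range_choose_mul_pow (l : ℕ) (y : R) :
    ∑ j ∈ range (l + 1), (l.choose j : R) * y ^ j = (1 + y) ^ l := by
  rw [add_comm 1 y, add_pow]
  exact sum_congr rfl fun j _ => by ring

theorem sum_range_sum_Ico_choose_mul_coeff_mul_pow (p : R[X]) {n : ℕ} (hp : p.natDegree < n)
    (y : R) :
    ∑ j ∈ range n, (∑ l ∈ Ico j n, (l.choose j : R) * p.coeff l) * y ^ j = p.eval (1 + y) := by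
  simp_rw [sum_mul, range_eq_Ico]
  rw [sum_Ico_Ico_comm, eval_eq_sum_range' hp, range_eq_Ico]
  refine sum_congr rfl fun l _ => ?_
  rw [← range_eq_Ico, ← sum_range_choose_mul_pow, mul_sum]
  exact sum_congr rfl fun j _ => by ring

theorem sum_Icc_sum_Icc_choose_mul_coeff_mul_pow (p : R[X]) {n : ℕ} (hp : p.natDegree < n)
    (y : R) :
    ∑ j ∈ Icc 1 n, (∑ l ∈ Icc j n, ((l - 1).choose (j - 1) : R) * p.coeff (l - 1)) * y ^ (j - 1)
      = p.eval (1 + y) := by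
  rw [← sum_range_sum_Ico_choose_mul_coeff_mul_pow p hp, range_eq_Ico,
    ← sum_Icc_add_one_sub_one]
  refine sum_congr rfl fun j hj => ?_
  obtain ⟨k, rfl⟩ : ∃ k, j = k + 1 := ⟨j - 1, by grind⟩
  simp only [Nat.add_sub_cancel]
  rw [sum_Icc_add_one_sub_one k n (fun l => (l.choose k : R) * p.coeff l)]

end

open Polynomial.Chebyshev

theorem mul_second_difference_U_eval_one_add_div {K : Type*} [Field K] [NeZero (2 : K)]
    (κ θ : K) (n : ℤ) :
    let u : ℤ → K := fun m => 1 / κ * (U K m).eval (1 + θ / (2 * κ))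
    κ * (u (n + 1) - 2 * u n + u (n - 1)) = θ * u n := by
  intro u
  rcases eq_or_ne κ 0 with rfl | hκ
  · simp [u] -- both sides vanish since `1 / 0 = 0`
  simp only [u, U_add_one, eval_sub, eval_mul, eval_ofNat, eval_X]
  field_simp
  ring

theorem sum_Icc_mul_pow_eq_U_eval (κ θ : ℝ) (C : ℕ → ℕ → ℝ)
    (hC : ∀ i j : ℕ, 1 ≤ j → j ≤ i →
      C i j = (1 / (2 ^ (j - 1) * κ ^ j)) *
        ∑ l ∈ Icc j i, ((l - 1).choose (j - 1) : ℝ) * (U ℝ ((i : ℤ) - 1)).coeff (l - 1))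
    (i : ℕ) :
    ∑ j ∈ Icc 1 i, C i j * θ ^ (j - 1) = 1 / κ * (U ℝ ((i : ℤ) - 1)).eval (1 + θ / (2 * κ)) := by
  obtain _ | n := i
  · simp [U_neg_one]
  have hU : U ℝ (((n + 1 : ℕ) : ℤ) - 1) = U ℝ n := by push_cast; rw [add_sub_cancel_right]
  have hdeg : (U ℝ n).natDegree < n + 1 := by simp [natDegree_U_natCast]
  rw [hU, ← sum_Icc_sum_Icc_choose_mul_coeff_mul_pow _ hdeg, mul_sum]
  refine sum_congr rfl fun j hj => ?_
  obtain ⟨k, rfl⟩ : ∃ k, j = k + 1 := ⟨j - 1, by grind⟩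
  rw [hC _ _ (by omega) (by grind), hU, Nat.add_sub_cancel, div_pow, mul_pow, pow_succ]
  ring

theorem stmt12_general (κ : ℝ)
    (C : ℕ → ℕ → ℝ)
    (hC : ∀ i j : ℕ, 1 ≤ j → j ≤ i →
      C i j = (1 / (2 ^ (j - 1) * κ ^ j)) *
        ∑ l ∈ Finset.Icc j i,
          (Nat.choose (l - 1) (j - 1) : ℝ) *
            (Polynomial.Chebyshev.U ℝ ((i : ℤ) - 1)).coeff (l - 1)) :
    ∀ θ : ℝ,
      (∀ i : ℕ, 1 ≤ i →
        (∑ j ∈ Finset.Icc 1 i, C i j * θ ^ (j - 1))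
          = (1 / κ) * (Polynomial.Chebyshev.U ℝ ((i : ℤ) - 1)).eval (1 + θ / (2 * κ))) ∧
      (∑ j ∈ Finset.Icc 1 0, C 0 j * θ ^ (j - 1)) = 0 ∧
      (∑ j ∈ Finset.Icc 1 1, C 1 j * θ ^ (j - 1)) = 1 / κ ∧
      (∀ i : ℕ, 1 ≤ i →
        κ * ((∑ j ∈ Finset.Icc 1 (i + 1), C (i + 1) j * θ ^ (j - 1))
            - 2 * (∑ j ∈ Finset.Icc 1 i, C i j * θ ^ (j - 1))
            + (∑ j ∈ Finset.Icc 1 (i - 1), C (i - 1) j * θ ^ (j - 1)))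
          = θ * ∑ j ∈ Finset.Icc 1 i, C i j * θ ^ (j - 1)) := by
  intro θ
  have hu := sum_Icc_mul_pow_eq_U_eval κ θ C hC
  refine ⟨fun i _ => hu i, by simp, by rw [hu]; simp, ?_⟩
  intro i hi
  obtain ⟨n, rfl⟩ : ∃ n, i = n + 1 := ⟨i - 1, by omega⟩
  simp only [hu]
  push_cast
  simpa using mul_second_difference_U_eval_one_add_div κ θ n

/-- For the symmetric random walk (`λ_i = μ_i = κ`), the matrix `C` is given by
`C(i,j) = (1/(2^{j-1} κ^j)) Σ_{l=j}^i binom(l-1,j-1) u(i-1,l-1)` with `u(k,l)` the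
coefficients of the Chebyshev polynomials of the second kind: the function
`i ↦ Σ_{j=1}^i C(i,j) θ^{j-1}` equals `(1/κ) U_{i-1}(1 + θ/(2κ))` and solves
`Qu = θu` with `u(0) = 0`, `u(1) = 1/κ`. -/
theorem stmt12 (κ : ℝ) (hκ : 0 < κ)
    (C : ℕ → ℕ → ℝ)
    (hC : ∀ i j : ℕ, 1 ≤ j → j ≤ i →
      C i j = (1 / (2 ^ (j - 1) * κ ^ j)) *
        ∑ l ∈ Finset.Icc j i,
          (Nat.choose (l - 1) (j - 1) : ℝ) *
            (Polynomial.Chebyshev.U ℝ ((i : ℤ) - 1)).coeff (l - 1)) :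
    ∀ θ : ℝ,
      (∀ i : ℕ, 1 ≤ i →
        (∑ j ∈ Finset.Icc 1 i, C i j * θ ^ (j - 1))
          = (1 / κ) * (Polynomial.Chebyshev.U ℝ ((i : ℤ) - 1)).eval (1 + θ / (2 * κ))) ∧
      (∑ j ∈ Finset.Icc 1 0, C 0 j * θ ^ (j - 1)) = 0 ∧
      (∑ j ∈ Finset.Icc 1 1, C 1 j * θ ^ (j - 1)) = 1 / κ ∧
      (∀ i : ℕ, 1 ≤ i →
        κ * ((∑ j ∈ Finset.Icc 1 (i + 1), C (i + 1) j * θ ^ (j - 1))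
            - 2 * (∑ j ∈ Finset.Icc 1 i, C i j * θ ^ (j - 1))
            + (∑ j ∈ Finset.Icc 1 (i - 1), C (i - 1) j * θ ^ (j - 1)))
          = θ * ∑ j ∈ Finset.Icc 1 i, C i j * θ ^ (j - 1)) :=
  stmt12_general κ C hC
end
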